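/- Let f, g, F, G : ℕ → ℕ satisfy Σf(x) ≤ ΣF(x) and Σg(x) ≤ ΣG(x) for all x. Then for every w, Σ(F ∗ G)(w) ≥ Σ(f ∗ g)(w). -/

import Mathlib

/-!
Exchanging the order of summation gives `Σ(f ∗ g)(w) = ∑_{x ≤ w} f x · Σg(w - x)`. Replacing `Σg`
by the larger `ΣG` only increases this. The weights `x ↦ ΣG(w - x)` are antitone, so by Abel
summation `∑_x f x · ΣG(w - x)` is a nonnegative combination of the prefix sums `Σf(x)`, and replacing
`f` by `F` increases it as well.
-/

/-- Prefix sum: `psum f x = ∑_{y ≤ x} f y`. -/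
def psum (f : ℕ → ℕ) (x : ℕ) : ℕ := ∑ y ∈ Finset.range (x + 1), f y

/-- Convolution: `(f ∗ g)(w) = ∑_{x+y=w} f(x)·g(y)`. -/
def conv (f g : ℕ → ℕ) (w : ℕ) : ℕ := ∑ x ∈ Finset.range (w + 1), f x * g (w - x)

open Finset

lemma psum_succ (f : ℕ → ℕ) (n : ℕ) : psum f (n + 1) = psum f n + f (n + 1) :=
  sum_range_succ f (n + 1)

lemma psum_mono (f : ℕ → ℕ) : Monotone (psum f) := fun _ _ hab =>
  sum_le_sum_of_subset (range_subset_range.2 (Nat.succ_le_succ hab))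

lemma psum_conv (f g : ℕ → ℕ) (w : ℕ) :
    psum (conv f g) w = ∑ x ∈ range (w + 1), f x * psum g (w - x) := by
  simp only [psum, conv, mul_sum]
  rw [sum_range_diag_flip (w + 1) fun x y => f x * g y]
  refine sum_congr rfl fun x hx => ?_
  rw [Nat.sub_add_comm (Nat.lt_succ_iff.1 (mem_range.1 hx))]

lemma sum_range_mul_eq_sum_psum_mul_sub {a : ℕ → ℕ} (ha : Antitone a) (h : ℕ → ℕ) (n : ℕ) :
    ∑ x ∈ range (n + 1), h x * a x =
      ∑ x ∈ range n, psum h x * (a x - a (x + 1)) + psum h n * a n := by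
  induction n with
  | zero => simp [psum]
  | succ n ih =>
    have hsplit : psum h n * (a n - a (n + 1)) + psum h n * a (n + 1) = psum h n * a n := by
      rw [← mul_add, Nat.sub_add_cancel (ha n.le_succ)]
    rw [sum_range_succ, ih, sum_range_succ, psum_succ, ← hsplit]
    ring

lemma sum_range_mul_le_of_psum_le {f F a : ℕ → ℕ} (hf : ∀ x, psum f x ≤ psum F x)
    (ha : Antitone a) (n : ℕ) :
    ∑ x ∈ range (n + 1), f x * a x ≤ ∑ x ∈ range (n + 1), F x * a x := by
  rw [sum_range_mul_eq_sum_psum_mul_sub ha, sum_range_mul_eq_sum_psum_mul_sub ha]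
  gcongr with x
  · exact hf x
  · exact hf n

theorem psum_conv_mono (f g F G : ℕ → ℕ)
    (hF : ∀ x, psum f x ≤ psum F x) (hG : ∀ x, psum g x ≤ psum G x) :
    ∀ w, psum (conv f g) w ≤ psum (conv F G) w := by
  intro w
  rw [psum_conv, psum_conv]
  calc ∑ x ∈ range (w + 1), f x * psum g (w - x)
      ≤ ∑ x ∈ range (w + 1), f x * psum G (w - x) := by gcongr; exact hG _
    _ ≤ ∑ x ∈ range (w + 1), F x * psum G (w - x) :=
      sum_range_mul_le_of_psum_le hF ((psum_mono G).comp_antitone antitone_const_tsub) w
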